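/- arXiv:1711.09805 — 3 statements merged into one kernel-verified Lean document; each statement's English description precedes it below -/
import Mathlib

section
/- In Shamir's (t, n) secret sharing over a finite field F with |F| > n, for any set A of at most t-1 share indices and any secret s, the joint distribution of the shares at indices in A is uniform on F^A; in particular it is independent of the secret s. -/
/-!
The shares seen by `A` are `s` plus the image of the coefficient vector under the additive map
`a ↦ (∑ⱼ aⱼ xᵢ^(j+1))ᵢ`. Lagrange interpolation of `cᵢ / xᵢ` at the distinct nodes `xᵢ` shows
that this map is onto `F^A` as soon as `|A| ≤ t - 1`. A surjective homomorphism of finite groups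
has fibres of equal size (cosets of the kernel), so it pushes the uniform distribution forward to
the uniform one, and the translation by `s` does not change that.
-/

open Finset Polynomial

namespace PMF

theorem map_uniformOfFintype_equiv {α β : Type*} [Fintype α] [Nonempty α] [Fintype β] [Nonempty β]
    (e : α ≃ β) : (uniformOfFintype α).map e = uniformOfFintype β := by
  ext b
  rw [map_apply, tsum_eq_single (e.symm b) fun a ha => if_neg (e.symm_apply_eq.not.mp (Ne.symm ha))]
  simp [Fintype.card_congr e]

theorem map_uniformOfFintype_of_card_fiber_eq {α β : Type*} [Fintype α] [Nonempty α] [Fintype β]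
    [Nonempty β] [DecidableEq β] (f : α → β) (hf : ∀ b c, #{a | f a = b} = #{a | f a = c}) :
    (uniformOfFintype α).map f = uniformOfFintype β := by
  ext b
  have hcard : Fintype.card α = Fintype.card β * #{a | f a = b} := by
    rw [← card_univ, card_eq_sum_card_fiberwise (fun a _ => mem_univ (f a))]
    simp [hf _ b]
  have hb : #{a | f a = b} ≠ 0 := by
    obtain ⟨a⟩ := ‹Nonempty α›
    rw [hf b (f a)]
    exact (card_pos.mpr ⟨a, by simp⟩).ne'
  rw [map_apply, tsum_fintype]
  simp only [uniformOfFintype_apply, ← sum_filter, sum_const, nsmul_eq_mul, hcard, eq_comm (a := b)]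
  push_cast
  rw [ENNReal.mul_inv (.inr (ENNReal.natCast_ne_top _)) (.inl (ENNReal.natCast_ne_top _)),
    mul_left_comm, ENNReal.mul_inv_cancel (by exact_mod_cast hb) (ENNReal.natCast_ne_top _), mul_one]

theorem map_uniformOfFintype_of_surjective {G H : Type*} [AddGroup G] [Fintype G] [AddGroup H]
    [Fintype H] (f : G →+ H) (hf : Function.Surjective f) :
    (uniformOfFintype G).map f = uniformOfFintype H := by
  classical
  exact map_uniformOfFintype_of_card_fiber_eq f fun b c =>
    AddMonoidHom.card_fiber_eq_of_mem_range f (hf b) (hf c)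

end PMF

section ShamirMask

variable {R ι : Type*} [CommRing R]

def shamirMask (x : ι → R) (m : ℕ) : (Fin m → R) →+ (ι → R) :=
  AddMonoidHom.mk' (fun a i => ∑ j : Fin m, a j * x i ^ ((j : ℕ) + 1))
    fun a b => by ext i; simp [add_mul, sum_add_distrib]

@[simp]
theorem shamirMask_apply (x : ι → R) (m : ℕ) (a : Fin m → R) (i : ι) :
    shamirMask x m a i = ∑ j : Fin m, a j * x i ^ ((j : ℕ) + 1) := rfl

theorem shamirMask_surjective {F : Type*} [Field F] [Fintype ι] [DecidableEq ι] {x : ι → F} {m : ℕ}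
    (hx : Function.Injective x) (hx0 : ∀ i, x i ≠ 0) (hm : Fintype.card ι ≤ m) :
    Function.Surjective (shamirMask x m) := by
  intro c
  set p := Lagrange.interpolate univ x (fun i => c i / x i)
  have hp : p ∈ degreeLT F m := mem_degreeLT.2 <|
    (Lagrange.degree_interpolate_lt _ hx.injOn).trans_le (by exact_mod_cast hm)
  refine ⟨degreeLTEquiv F m ⟨p, hp⟩, funext fun i => ?_⟩
  calc shamirMask x m (degreeLTEquiv F m ⟨p, hp⟩) i = p.eval (x i) * x i := by
        simp only [shamirMask_apply, eval_eq_sum_degreeLTEquiv hp, sum_mul, pow_succ, mul_assoc]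
    _ = c i := by
        rw [Lagrange.eval_interpolate_at_node _ hx.injOn (mem_univ i), div_mul_cancel₀ _ (hx0 i)]

end ShamirMask

theorem stmt_3_general {F : Type} [Field F] [Fintype F]
    (n t : ℕ)
    (x : Fin n → F) (hx : Function.Injective x) (hx0 : ∀ i, x i ≠ 0)
    (A : Finset (Fin n)) (hA : A.card ≤ t - 1) (s : F) :
    (PMF.uniformOfFintype (Fin (t - 1) → F)).map
        (fun a (i : A) => s + ∑ j : Fin (t - 1), a j * (x i) ^ ((j : ℕ) + 1))
      = PMF.uniformOfFintype (↥A → F) := by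
  have hmask : Function.Surjective (shamirMask (fun i : A => x i) (t - 1)) :=
    shamirMask_surjective (hx.comp Subtype.val_injective) (fun i => hx0 i) (by simpa using hA)
  calc _ = ((PMF.uniformOfFintype _).map (shamirMask (fun i : A => x i) (t - 1))).map
        (Equiv.addLeft fun _ => s) := by rw [PMF.map_comp]; rfl
    _ = _ := by rw [PMF.map_uniformOfFintype_of_surjective _ hmask, PMF.map_uniformOfFintype_equiv]

/-- Shamir `(t,n)` secret sharing over a finite field `F` with `|F| > n`: for any set `A`
of at most `t-1` share indices and any secret `s`, the joint distribution of the shares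
at indices in `A` (with uniformly random coefficients) is uniform on `F^A`; in
particular it is independent of the secret `s`. -/
theorem stmt_3 {F : Type} [Field F] [Fintype F] [DecidableEq F]
    (n t : ℕ) (hcard : n < Fintype.card F)
    (x : Fin n → F) (hx : Function.Injective x) (hx0 : ∀ i, x i ≠ 0)
    (A : Finset (Fin n)) (hA : A.card ≤ t - 1) (s : F) :
    (PMF.uniformOfFintype (Fin (t - 1) → F)).map
        (fun a (i : A) => s + ∑ j : Fin (t - 1), a j * (x i) ^ ((j : ℕ) + 1))
      = PMF.uniformOfFintype (↥A → F) :=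
  stmt_3_general n t x hx hx0 A hA s
end

section
/- Resharing preserves uniformity of below-threshold views: if a fresh Shamir sharing of the same secret is generated with independently chosen fresh random coefficients, then the joint distribution of any at most t-1 old shares together with any at most t-1 new shares is the product of two uniform distributions on F^{t-1}-subvectors, hence the new shares are statistically independent of the old shares for a below-threshold coalition. -/
/-!
Both share vectors are affine images `s + a ᵥ* M` of the coefficient vectors, where
`M j i = x_i ^ (j + 1)`. Since the evaluation points are distinct and nonzero, and there are at
most `t - 1` of them, Lagrange interpolation of `z_i / x_i` followed by multiplication by `X`
shows that `a ↦ a ᵥ* M` is surjective. The pushforward of the uniform distribution along a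
surjective affine map of finite groups is uniform, because all fibres are cosets of the kernel.
-/

open Polynomial Matrix

namespace PMF

theorem map_const_add_uniformOfFintype {G H : Type*} [AddGroup G] [AddGroup H] [Fintype G]
    [Fintype H] (φ : G →+ H) (hφ : Function.Surjective φ) (c : H) :
    (uniformOfFintype G).map (fun g => c + φ g) = uniformOfFintype H := by
  classical
  ext b
  obtain ⟨a, ha⟩ := hφ (-c + b)
  have card_fiber : Nat.card {g // c + φ g = b} = Nat.card φ.ker :=
    Nat.card_congr <| (Equiv.subRight a).subtypeEquiv fun g => by
      rw [AddMonoidHom.mem_ker, Equiv.subRight_apply, map_sub, ha, sub_eq_zero,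
        eq_neg_add_iff_add_eq]
  have card_total : Nat.card φ.ker * Nat.card H = Nat.card G := by
    rw [← φ.ker.card_mul_index, AddSubgroup.index_ker,
      AddMonoidHom.range_eq_top_of_surjective _ hφ, AddSubgroup.card_top]
  have ker_ne_zero : (Nat.card φ.ker : ENNReal) ≠ 0 := Nat.cast_ne_zero.mpr Nat.card_pos.ne'
  rw [← toOuterMeasure_apply_singleton, toOuterMeasure_map_apply,
    toOuterMeasure_uniformOfFintype_apply, uniformOfFintype_apply]
  simp only [← Nat.card_eq_fintype_card, Set.preimage, Set.mem_singleton_iff]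
  rw [Set.coe_ofPred, card_fiber, ← card_total, Nat.cast_mul, ENNReal.div_eq_inv_mul,
    ENNReal.mul_inv (.inl ker_ne_zero) (.inl (ENNReal.natCast_ne_top _)), mul_right_comm,
    ENNReal.inv_mul_cancel ker_ne_zero (ENNReal.natCast_ne_top _), one_mul]

end PMF

section ShareMatrix

variable {F ι : Type*} [Field F]

def shareMatrix (m : ℕ) (x : ι → F) : Matrix (Fin m) ι F :=
  Matrix.of fun j i => x i ^ ((j : ℕ) + 1)

theorem vecMul_shareMatrix_surjective [Fintype ι] [DecidableEq ι] {m : ℕ} {x : ι → F}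
    (hx : Function.Injective x) (hx0 : ∀ i, x i ≠ 0) (hm : Fintype.card ι ≤ m) :
    Function.Surjective fun a : Fin m → F => a ᵥ* shareMatrix m x := by
  intro z
  set q := Lagrange.interpolate Finset.univ x (fun i => z i / x i)
  have hdeg : q.degree < m :=
    (Lagrange.degree_interpolate_lt _ hx.injOn).trans_le (by exact_mod_cast hm)
  refine ⟨fun j => q.coeff j, funext fun i => ?_⟩
  have hq : q.eval (x i) = z i / x i :=
    Lagrange.eval_interpolate_at_node _ hx.injOn (Finset.mem_univ i)
  calc ∑ j : Fin m, q.coeff j * x i ^ ((j : ℕ) + 1)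
      = x i * ∑ j : Fin m, q.coeff j * x i ^ (j : ℕ) := by
        rw [Finset.mul_sum]; exact Finset.sum_congr rfl fun j _ => by ring
    _ = x i * q.eval (x i) := by
        rw [sum_fin (fun e a => a * x i ^ e) (by simp) hdeg, eval_eq_sum]
    _ = z i := by rw [hq, mul_div_cancel₀ _ (hx0 i)]

end ShareMatrix

theorem stmt_5_general {F : Type} [Field F] [Fintype F]
    (n t : ℕ)
    (x : Fin n → F) (hx : Function.Injective x) (hx0 : ∀ i, x i ≠ 0)
    (A A' : Finset (Fin n)) (hA : A.card ≤ t - 1) (hA' : A'.card ≤ t - 1) (s : F) :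
    (PMF.uniformOfFintype ((Fin (t - 1) → F) × (Fin (t - 1) → F))).map
        (fun aa =>
          ((fun (i : A) => s + ∑ j : Fin (t - 1), aa.1 j * (x i) ^ ((j : ℕ) + 1)),
           (fun (i : A') => s + ∑ j : Fin (t - 1), aa.2 j * (x i) ^ ((j : ℕ) + 1))))
      = PMF.uniformOfFintype ((↥A → F) × (↥A' → F)) := by
  have surj : ∀ B : Finset (Fin n), B.card ≤ t - 1 →
      Function.Surjective (vecMulLinear (shareMatrix (t - 1) fun i : B => x i)) :=
    fun B hB => vecMul_shareMatrix_surjective (x := fun i : B => x i)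
      (hx.comp Subtype.val_injective) (fun i => hx0 i) (by simpa using hB)
  exact PMF.map_const_add_uniformOfFintype
    ((vecMulLinear _).toAddMonoidHom.prodMap (vecMulLinear _).toAddMonoidHom)
    ((surj A hA).prodMap (surj A' hA')) (fun _ => s, fun _ => s)

/-- Resharing preserves uniformity of below-threshold views: with fresh independent
uniform coefficients for the new sharing of the same secret `s`, the joint distribution
of at most `t-1` old shares (indices `A`) together with at most `t-1` new shares
(indices `A'`) is the uniform (product) distribution; hence the new shares are
statistically independent of the old shares for a below-threshold coalition. -/
theorem stmt_5 {F : Type} [Field F] [Fintype F] [DecidableEq F]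
    (n t : ℕ) (hcard : n < Fintype.card F)
    (x : Fin n → F) (hx : Function.Injective x) (hx0 : ∀ i, x i ≠ 0)
    (A A' : Finset (Fin n)) (hA : A.card ≤ t - 1) (hA' : A'.card ≤ t - 1) (s : F) :
    (PMF.uniformOfFintype ((Fin (t - 1) → F) × (Fin (t - 1) → F))).map
        (fun aa =>
          ((fun (i : A) => s + ∑ j : Fin (t - 1), aa.1 j * (x i) ^ ((j : ℕ) + 1)),
           (fun (i : A') => s + ∑ j : Fin (t - 1), aa.2 j * (x i) ^ ((j : ℕ) + 1))))
      = PMF.uniformOfFintype ((↥A → F) × (↥A' → F)) :=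
  stmt_5_general n t x hx hx0 A A' hA hA' s
end

section
/- Evidence-chain knowledge extraction: let n ≥ 1 and suppose there are predicates K : Data → Time → Prop (knowledge, monotone in time), a timestamp-soundness axiom and a commitment-binding axiom as below. If the adversary knows (c_n, ts_n) at time t_{n+1}, each timestamp ts_i is valid for c_i at time t_{i+1}, and each link i ∈ {2,...,n} satisfies: knowing c_i at time t_i plus a later-revealed valid decommitment of c_i to (c_{i-1}, ts_{i-1}) yields knowledge of (c_{i-1}, ts_{i-1}) at time t_i — then the adversary knew (c_1, ts_1) at time t_2, and hence knew c_1 at time t_1. -/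
/-!
Backward induction along the chain: knowing the pair `(cᵢ, tsᵢ)` at `tᵢ₊₁`, timestamp
soundness turns the valid timestamp `tsᵢ` into knowledge of `cᵢ` already at `tᵢ`, and the
commitment link then yields knowledge of the previous pair `(cᵢ₋₁, tsᵢ₋₁)` at `tᵢ`.
-/

theorem knows_pair_of_evidenceChain {Data Time : Type} (K : Data → Time → Prop)
    (pair : Data → Data → Data) (tst : Data → Time) (VerTs : Data → Data → Time → Bool)
    (hTs : ∀ m s t, K (pair m s) t → VerTs m s t = true → K m (tst s))
    {m : ℕ} (c ts : Fin (m + 1) → Data) (t : Fin (m + 2) → Time)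
    (htst : ∀ i, tst (ts i) = t i.castSucc)
    (hlast : K (pair (c (Fin.last m)) (ts (Fin.last m))) (t (Fin.last (m + 1))))
    (hver : ∀ i, VerTs (c i) (ts i) (t i.succ) = true)
    (hlink : ∀ i : Fin m, K (c i.succ) (t i.succ.castSucc) →
      K (pair (c i.castSucc) (ts i.castSucc)) (t i.castSucc.succ)) :
    ∀ i, K (pair (c i) (ts i)) (t i.succ) := by
  intro i
  induction i using Fin.reverseInduction with
  | last => exact hlast
  | cast i ih => exact hlink i (htst _ ▸ hTs _ _ _ ih (hver _))

/-- Evidence-chain knowledge extraction (backward induction of Theorem 2 of PROPYLA):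
with a monotone knowledge predicate `K`, timestamp soundness, and the per-link
commitment-extraction implications, if the adversary knows `(cₙ, tsₙ)` at time `tₙ₊₁`
and every timestamp `tsᵢ` is valid for `cᵢ` at time `tᵢ₊₁`, then it knew `(c₁, ts₁)` at
time `t₂`, and hence knew `c₁` at time `t₁`. (Indices are 0-based: `c ⟨0,_⟩ = c₁`.) -/
theorem stmt_7 {Data Time : Type}
    (K : Data → Time → Prop) (pair : Data → Data → Data)
    (tst : Data → Time) (VerTs : Data → Data → Time → Bool)
    (hTs : ∀ m s t, K (pair m s) t → VerTs m s t = true → K m (tst s))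
    (n : ℕ) (hn : 1 ≤ n)
    (c ts : Fin n → Data) (t : Fin (n + 1) → Time)
    (htst : ∀ i : Fin n, tst (ts i) = t i.castSucc)
    (hlast : K (pair (c ⟨n - 1, by omega⟩) (ts ⟨n - 1, by omega⟩)) (t (Fin.last n)))
    (hver : ∀ i : Fin n, VerTs (c i) (ts i) (t i.succ) = true)
    (hlink : ∀ i : Fin n, 0 < (i : ℕ) → K (c i) (t i.castSucc) →
      K (pair (c ⟨(i : ℕ) - 1, by exact lt_of_le_of_lt (Nat.sub_le _ _) i.isLt⟩)
              (ts ⟨(i : ℕ) - 1, by exact lt_of_le_of_lt (Nat.sub_le _ _) i.isLt⟩))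
        (t i.castSucc)) :
    K (pair (c ⟨0, hn⟩) (ts ⟨0, hn⟩)) (t ⟨1, by omega⟩) ∧ K (c ⟨0, hn⟩) (t ⟨0, by omega⟩) := by
  obtain ⟨m, rfl⟩ : ∃ m, n = m + 1 := ⟨n - 1, by omega⟩
  have hchain := knows_pair_of_evidenceChain K pair tst VerTs hTs c ts t htst
    (by simpa [Fin.last] using hlast) hver
    (fun i hi => by
      simpa [Fin.castSucc, Fin.castAdd, Fin.castLE] using hlink i.succ i.succ_pos hi)
  have hfirst : K (pair (c 0) (ts 0)) (t 1) := hchain 0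
  exact ⟨hfirst, htst 0 ▸ hTs _ _ _ hfirst (hver 0)⟩
end
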